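/- arXiv:2405.16691 — 7 statements merged into one kernel-verified Lean document; each statement's English description precedes it below -/
import Mathlib

section
/- Let G be a finite group acting transitively on a nonempty finite set X, and let R be a nonempty transitive binary relation on X preserved by G. Then R is symmetric. -/
/-- If a finite group `G` acts transitively on a nonempty finite set `X` and `R` is a
nonempty transitive binary relation on `X` preserved by `G`, then `R` is symmetric. -/
theorem stmt_1 {G X : Type*} [Group G] [Finite G] [Finite X] [Nonempty X]
    [MulAction G X] [MulAction.IsPretransitive G X]
    (R : X → X → Prop) (hne : ∃ x y, R x y)
    (htrans : ∀ {x y z : X}, R x y → R y z → R x z)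
    (hpres : ∀ (g : G) {x y : X}, R x y → R (g • x) (g • y)) :
    Symmetric R := by
  -- key: from R x (g • x) we get R x (g^(k+1) • x) for all k
  have key : ∀ (x : X) (g : G), R x (g • x) → ∀ k : ℕ, R x (g ^ (k + 1) • x) := by
    intro x g h k
    induction k with
    | zero => simpa using h
    | succ n ih =>
      refine htrans ih ?_
      have := hpres (g ^ (n + 1)) h
      simpa [smul_smul, ← pow_succ] using this
  -- reflexivity
  have hrefl : ∀ x : X, R x x := by
    obtain ⟨a, b, hab⟩ := hne
    obtain ⟨g, hg⟩ := MulAction.exists_smul_eq G a b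
    have h1 : R a (g • a) := hg ▸ hab
    have h2 : R a a := by
      have := key a g h1 (orderOf g - 1)
      have ho : orderOf g - 1 + 1 = orderOf g :=
        Nat.succ_pred_eq_of_pos (orderOf_pos g)
      rw [ho, pow_orderOf_eq_one, one_smul] at this
      exact this
    intro x
    obtain ⟨h, hh⟩ := MulAction.exists_smul_eq G a x
    simpa [hh] using hpres h h2
  -- symmetry
  intro x y hxy
  obtain ⟨g, hg⟩ := MulAction.exists_smul_eq G x y
  have h1 : R x (g • x) := hg ▸ hxy
  -- show R y (g^(k+1) • x) for all k
  have key2 : ∀ k : ℕ, R y (g ^ (k + 1) • x) := by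
    intro k
    induction k with
    | zero => simpa [hg] using hrefl y
    | succ n ih =>
      refine htrans ih ?_
      have := hpres (g ^ (n + 1)) h1
      simpa [smul_smul, ← pow_succ] using this
  have := key2 (orderOf g - 1)
  have ho : orderOf g - 1 + 1 = orderOf g := Nat.succ_pred_eq_of_pos (orderOf_pos g)
  rw [ho, pow_orderOf_eq_one, one_smul] at this
  exact this
end

section
/- Let Γ be a finite graph, G a vertex-transitive group of automorphisms of Γ, and α = (v₀, …, vₙ) a G-consistent walk. Then |G_{α̂}| = |G_α| · |Succ_G(α)|, where α̂ = (v₀, …, v_{n−1}), G_α is the pointwise stabilizer of all vertices of α, and Succ_G(α) is the set of G-successors of α. -/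
/-- Orbit–stabilizer for consistent walks: for a vertex-transitive `G ≤ Aut(Γ)` on a finite
graph and a `G`-consistent walk `α = (v₀, …, vₙ)`, the order of the pointwise stabilizer of
`α̂ = (v₀, …, v_{n-1})` equals the order of the pointwise stabilizer of `α` times the number
of `G`-successors of `α`. -/
theorem stmt_6 {V G : Type*} [Fintype V] [Group G] [Finite G] [MulAction G V]
    [MulAction.IsPretransitive G V] (Γ : SimpleGraph V)
    (hAut : ∀ (g : G) (u v : V), Γ.Adj u v → Γ.Adj (g • u) (g • v))
    (n : ℕ) (α : Fin (n + 1) → V)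
    (hwalk : ∀ i : Fin n, Γ.Adj (α i.castSucc) (α i.succ))
    (hcons : ∃ g : G, ∀ i : Fin n, g • α i.castSucc = α i.succ) :
    Nat.card {h : G // ∀ i : Fin n, h • α i.castSucc = α i.castSucc}
      = Nat.card {h : G // ∀ i : Fin (n + 1), h • α i = α i}
        * Nat.card {β : Fin (n + 1) → V |
            ∃ σ : G, (∀ i : Fin n, σ • α i.castSucc = α i.succ) ∧ β = fun i => σ • α i} := by
  classical
  obtain ⟨σ₀, hσ₀⟩ := hcons
  let H : Subgroup G :=
  { carrier := {h : G | ∀ i : Fin n, h • α i.castSucc = α i.castSucc}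
    one_mem' := fun i => one_smul _ _
    mul_mem' := fun {a b} ha hb i => by rw [mul_smul, hb i, ha i]
    inv_mem' := fun {a} ha i => inv_smul_eq_iff.mpr (ha i).symm }
  set w := α (Fin.last n) with hw
  -- the LHS subtype is (defeq to) H
  have e1 : {h : G // ∀ i : Fin n, h • α i.castSucc = α i.castSucc} ≃ H :=
    Equiv.subtypeEquivRight fun h => Iff.rfl
  -- the pointwise stabilizer of α is the stabilizer of w inside H
  have e2 : {h : G // ∀ i : Fin (n + 1), h • α i = α i} ≃ MulAction.stabilizer H w :=
  { toFun := fun h => ⟨⟨h.1, fun i => h.2 i.castSucc⟩, h.2 (Fin.last n)⟩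
    invFun := fun x => ⟨x.1.1, fun i => Fin.lastCases x.2 (fun j => x.1.2 j) i⟩
    left_inv := fun h => Subtype.ext rfl
    right_inv := fun x => Subtype.ext (Subtype.ext rfl) }
  -- the set of successors is in bijection with the H-orbit of w
  set S : Set (Fin (n + 1) → V) :=
    {β : Fin (n + 1) → V |
      ∃ σ : G, (∀ i : Fin n, σ • α i.castSucc = α i.succ) ∧ β = fun i => σ • α i} with hS
  have hback : ∀ i : Fin n, σ₀⁻¹ • α i.succ = α i.castSucc := fun i => by
    rw [← hσ₀ i, inv_smul_smul]
  have key : ∀ β ∈ S, ∀ i : Fin n, β i.castSucc = α i.succ := by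
    rintro β ⟨σ, hσ, rfl⟩ i
    exact hσ i
  have memH : ∀ β ∈ S, σ₀⁻¹ • β (Fin.last n) ∈ MulAction.orbit H w := by
    rintro β ⟨σ, hσ, rfl⟩
    refine ⟨⟨σ₀⁻¹ * σ, fun i => ?_⟩, ?_⟩
    · rw [mul_smul, hσ i, hback i]
    · show (σ₀⁻¹ * σ) • w = _
      rw [mul_smul]
  have e3 : S ≃ MulAction.orbit H w := by
    refine Equiv.ofBijective
      (fun β => ⟨σ₀⁻¹ • β.1 (Fin.last n), memH β.1 β.2⟩) ⟨?_, ?_⟩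
    · rintro β β' hββ'
      have hl : β.1 (Fin.last n) = β'.1 (Fin.last n) :=
        smul_left_cancel σ₀⁻¹ (congrArg Subtype.val hββ')
      refine Subtype.ext (funext fun i => ?_)
      refine Fin.lastCases hl (fun j => ?_) i
      rw [key β.1 β.2 j, key β'.1 β'.2 j]
    · rintro ⟨x, h, hh⟩
      refine ⟨⟨fun i => (σ₀ * (h : G)) • α i, ⟨σ₀ * (h : G), fun i => ?_, rfl⟩⟩, ?_⟩
      · rw [mul_smul, h.2 i, hσ₀ i]
      · refine Subtype.ext ?_
        show σ₀⁻¹ • (σ₀ * (h : G)) • w = x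
        rw [mul_smul, inv_smul_smul]
        exact hh
  -- orbit–stabilizer for H acting on V
  have hos : Nat.card H
      = Nat.card (MulAction.stabilizer H w) * Nat.card (MulAction.orbit H w) := by
    rw [← Nat.card_congr (MulAction.orbitProdStabilizerEquivGroup H w), Nat.card_prod,
      Nat.mul_comm]
  rw [Nat.card_congr e1, Nat.card_congr e2, Nat.card_congr e3, hos]
end

section
/- Let G be a group acting on a finite set X, and let α = (v₀, …, vₙ) be a tuple with a 'shunt' g ∈ G (meaning vᵢ^g = v_{i+1} for all i < n). Then the orbit of the tuple (v₁, …, vₙ, vₙ^g) under the pointwise stabilizer G_{(v₁,…,vₙ)} has size |G_{(v₀,…,v_{n−1})}| / |G_{(v₀,…,vₙ)}|. -/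
/-- Abstract orbit–stabilizer computation underlying the successor-counting lemma: if `g` is a
shunt of the tuple `α = (v₀, …, vₙ)` in a finite `G`-set, then the orbit of the tuple
`(v₁, …, vₙ, g • vₙ)` under the pointwise stabilizer of `(v₁, …, vₙ)` has size
`|G_{(v₀,…,v_{n-1})}| / |G_{(v₀,…,vₙ)}|`. -/
theorem stmt_7 {X G : Type*} [Finite X] [Group G] [Finite G] [MulAction G X]
    (n : ℕ) (α : Fin (n + 1) → X)
    (g : G) (hg : ∀ i : Fin n, g • α i.castSucc = α i.succ) :
    Nat.card {β : Fin (n + 1) → X |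
        ∃ s : G, (∀ i : Fin n, s • α i.succ = α i.succ) ∧ β = fun i => s • g • α i}
      = Nat.card {h : G // ∀ i : Fin n, h • α i.castSucc = α i.castSucc}
        / Nat.card {h : G // ∀ i : Fin (n + 1), h • α i = α i} := by
  have hg' : ∀ i : Fin n, g⁻¹ • α i.succ = α i.castSucc := by
    intro i; rw [inv_smul_eq_iff, hg]
  set f : Fin n → X := fun i => α i.succ with hf
  set H := MulAction.stabilizer G f with hH
  set β₀ : Fin (n + 1) → X := fun i => g • α i with hβ₀
  have hmem : ∀ s : G, s ∈ H ↔ ∀ i : Fin n, s • α i.succ = α i.succ := by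
    intro s
    rw [hH, MulAction.mem_stabilizer_iff]
    exact ⟨fun h i => congrFun h i, fun h => funext h⟩
  have hset : {β : Fin (n + 1) → X |
      ∃ s : G, (∀ i : Fin n, s • α i.succ = α i.succ) ∧ β = fun i => s • g • α i}
      = MulAction.orbit H β₀ := by
    ext β
    simp only [Set.mem_setOf_eq, MulAction.mem_orbit_iff]
    constructor
    · rintro ⟨s, hs, rfl⟩
      exact ⟨⟨s, (hmem s).2 hs⟩, rfl⟩
    · rintro ⟨⟨s, hs⟩, rfl⟩
      exact ⟨s, (hmem s).1 hs, rfl⟩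
  have hstab : ∀ s : H, s ∈ MulAction.stabilizer H β₀ ↔
      ∀ i : Fin (n + 1), (s : G) • g • α i = g • α i := by
    intro s
    rw [MulAction.mem_stabilizer_iff]
    exact ⟨fun h i => congrFun h i, fun h => funext h⟩
  -- orbit–stabilizer
  have key : Nat.card (MulAction.orbit H β₀) * Nat.card (MulAction.stabilizer H β₀)
      = Nat.card H := by
    rw [Nat.card_congr (MulAction.orbitEquivQuotientStabilizer H β₀),
      ← Subgroup.card_eq_card_quotient_mul_card_subgroup]
  -- conjugation equivalence for the numerator
  have e1 : Nat.card {h : G // ∀ i : Fin n, h • α i.castSucc = α i.castSucc}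
      = Nat.card H := by
    refine Nat.card_congr ((MulAut.conj g).toEquiv.subtypeEquiv fun h => ?_)
    rw [hmem]
    constructor
    · intro hh i
      show (g * h * g⁻¹) • α i.succ = α i.succ
      rw [mul_smul, mul_smul, hg' i, hh i, hg i]
    · intro hh i
      have h1 : (g * h * g⁻¹) • α i.succ = α i.succ := hh i
      rw [mul_smul, mul_smul, hg' i, ← eq_inv_smul_iff] at h1
      rw [h1, hg' i]
  -- conjugation equivalence for the stabilizer of β₀
  have e2 : Nat.card (MulAction.stabilizer H β₀)
      = Nat.card {h : G // ∀ i : Fin (n + 1), h • α i = α i} := by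
    refine Nat.card_congr
      ⟨fun s => ⟨g⁻¹ * ((s : H) : G) * g, fun i => ?_⟩,
       fun k => ⟨⟨g * (k : G) * g⁻¹, (hmem _).2 fun i => ?_⟩, ?_⟩, fun s => ?_, fun k => ?_⟩
    · rw [mul_smul, mul_smul, (hstab _).1 s.2 i, inv_smul_smul]
    · rw [mul_smul, mul_smul, hg' i, k.2 i.castSucc, hg i]
    · rw [hstab]
      intro i
      show (g * (k : G) * g⁻¹) • g • α i = g • α i
      rw [mul_smul, mul_smul, inv_smul_smul, k.2 i]
    · refine Subtype.ext (Subtype.ext ?_)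
      show g * (g⁻¹ * ((s : H) : G) * g) * g⁻¹ = ((s : H) : G)
      group
    · refine Subtype.ext ?_
      show g⁻¹ * (g * (k : G) * g⁻¹) * g = (k : G)
      group
  have hpos : 0 < Nat.card {h : G // ∀ i : Fin (n + 1), h • α i = α i} :=
    Nat.card_pos_iff.2 ⟨⟨⟨1, fun i => one_smul _ _⟩⟩, Subtype.finite⟩
  rw [hset, e1, ← e2]
  rw [← key, Nat.mul_div_cancel _ (e2 ▸ hpos)]
end

section
/- Let Γ be a graph, G ≤ Aut(Γ), and α a G-consistent walk with shunt g. Then ⟨Sh_G(α)⟩ = ⟨G_{α̂}, g⟩, i.e., the group generated by all shunts of α equals the group generated by the pointwise stabilizer of the truncated walk α̂ together with any single shunt g. -/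
/-- For a `G`-consistent walk `α` with shunt `g`, the subgroup generated by all shunts of `α`
equals the subgroup generated by the pointwise stabilizer of the truncated walk
`α̂ = (v₀, …, v_{n-1})` together with the single shunt `g`. -/
theorem stmt_9 {V G : Type*} [Group G] [MulAction G V] (Γ : SimpleGraph V)
    (hAut : ∀ (g : G) (u v : V), Γ.Adj u v → Γ.Adj (g • u) (g • v))
    (n : ℕ) (α : Fin (n + 1) → V)
    (hwalk : ∀ i : Fin n, Γ.Adj (α i.castSucc) (α i.succ))
    (g : G) (hg : ∀ i : Fin n, g • α i.castSucc = α i.succ) :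
    Subgroup.closure {σ : G | ∀ i : Fin n, σ • α i.castSucc = α i.succ}
      = Subgroup.closure ({h : G | ∀ i : Fin n, h • α i.castSucc = α i.castSucc} ∪ {g}) := by
  apply le_antisymm
  · rw [Subgroup.closure_le]
    intro σ hσ
    have hgmem : g ∈ Subgroup.closure
        ({h : G | ∀ i : Fin n, h • α i.castSucc = α i.castSucc} ∪ {g}) :=
      Subgroup.subset_closure (Or.inr rfl)
    have hmem : g⁻¹ * σ ∈ Subgroup.closure
        ({h : G | ∀ i : Fin n, h • α i.castSucc = α i.castSucc} ∪ {g}) :=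
      Subgroup.subset_closure (Or.inl (fun i => by
        rw [mul_smul, hσ i, ← hg i, inv_smul_smul]))
    have := mul_mem hgmem hmem
    simpa using this
  · rw [Subgroup.closure_le]
    intro σ hσ
    have hgmem : g ∈ Subgroup.closure
        {σ : G | ∀ i : Fin n, σ • α i.castSucc = α i.succ} :=
      Subgroup.subset_closure hg
    rcases hσ with hσ | hσ
    · have hmem : g * σ ∈ Subgroup.closure
          {σ : G | ∀ i : Fin n, σ • α i.castSucc = α i.succ} :=
        Subgroup.subset_closure (fun i => by rw [mul_smul, hσ i, hg i])
      have := mul_mem (inv_mem hgmem) hmem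
      simpa using this
    · rw [Set.mem_singleton_iff] at hσ
      subst hσ
      exact hgmem
end

section
/- Let Γ be a graph, G ≤ Aut(Γ), and let α be a G-consistent walk that has Property (R) with respect to G. If the pointwise stabilizer G_α fixes every G-successor of α (as a walk), then G_α = 1. -/
/-- If a `G`-consistent walk `α` has Property (R) and the pointwise stabilizer `G_α` fixes every
`G`-successor of `α` (as a walk), then `G_α` is trivial. (The action of `G` on the graph is
faithful, since `G` is a group of automorphisms.) -/
theorem stmt_10 {V G : Type*} [Group G] [MulAction G V] [FaithfulSMul G V]
    (Γ : SimpleGraph V)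
    (hAut : ∀ (g : G) (u v : V), Γ.Adj u v → Γ.Adj (g • u) (g • v))
    (n : ℕ) (α : Fin (n + 1) → V)
    (hwalk : ∀ i : Fin n, Γ.Adj (α i.castSucc) (α i.succ))
    (hcons : ∃ g : G, ∀ i : Fin n, g • α i.castSucc = α i.succ)
    (hR : ∀ v : V, ∃ (m : ℕ) (c : Fin (m + 1) → (Fin (n + 1) → V)),
        c 0 = α ∧
        (∀ j : Fin m, ∃ σ : G,
          (∀ i : Fin n, σ • (c j.castSucc) i.castSucc = (c j.castSucc) i.succ) ∧
          c j.succ = fun i => σ • (c j.castSucc) i) ∧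
        c (Fin.last m) (Fin.last n) = v)
    (hfix : ∀ h : G, (∀ i : Fin (n + 1), h • α i = α i) →
        ∀ σ : G, (∀ i : Fin n, σ • α i.castSucc = α i.succ) →
          ∀ i : Fin (n + 1), h • σ • α i = σ • α i) :
    ∀ h : G, (∀ i : Fin (n + 1), h • α i = α i) → h = 1 := by
  intro h hfixα
  refine eq_of_smul_eq_smul (M := G) (α := V) fun v => ?_
  rw [one_smul]
  obtain ⟨m, c, hc0, hstep, hclast⟩ := hR v
  suffices key : ∀ j : Fin (m + 1), ∃ τ : G, (∀ i, c j i = τ • α i) ∧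
      (∀ i, (τ⁻¹ * h * τ) • α i = α i) by
    obtain ⟨τ, hcτ, hhτ⟩ := key (Fin.last m)
    have h1 := hhτ (Fin.last n)
    have h2 := hcτ (Fin.last n)
    rw [hclast] at h2
    calc h • v = h • τ • α (Fin.last n) := by rw [← h2]
      _ = τ • (τ⁻¹ * h * τ) • α (Fin.last n) := by
          simp only [smul_smul]; group
      _ = τ • α (Fin.last n) := by rw [h1]
      _ = v := h2.symm
  intro j
  induction j using Fin.induction with
  | zero => exact ⟨1, by simp [hc0], by simpa using hfixα⟩
  | succ j ih =>
    obtain ⟨τ, hcτ, hhτ⟩ := ih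
    obtain ⟨σ, hσ1, hσ2⟩ := hstep j
    have hshunt : ∀ i : Fin n, (τ⁻¹ * σ * τ) • α i.castSucc = α i.succ := by
      intro i
      have h1 := hσ1 i
      rw [hcτ, hcτ] at h1
      simp only [mul_smul]
      rw [h1, inv_smul_smul]
    have hf := hfix (τ⁻¹ * h * τ) hhτ (τ⁻¹ * σ * τ) hshunt
    refine ⟨σ * τ, ?_, ?_⟩
    · intro i
      rw [hσ2]
      simp only [hcτ, smul_smul]
    · intro i
      have hg : (σ * τ)⁻¹ * h * (σ * τ) =
          (τ⁻¹ * σ * τ)⁻¹ * ((τ⁻¹ * h * τ) * (τ⁻¹ * σ * τ)) := by group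
      rw [hg, mul_smul, mul_smul, hf i, inv_smul_smul]
end

section
/- Let Γ be a graph, G ≤ Aut(Γ), and suppose α = (v₀,…,v_r) is a G-consistent walk and β = (v₁,…,v_{r+1}) is a G-successor of α. Then the pointwise stabilizer G_α fixes β (as a tuple) if and only if the walk (v₀,…,v_r,v_{r+1}) has exactly one G-successor. -/
/-- For a `G`-consistent walk `α = (v₀, …, v_r)` and a `G`-successor `β = (v₁, …, v_{r+1})` of
`α` (with witnessing shunt `σ`, so `v_{r+1} = σ • v_r`), the pointwise stabilizer `G_α` fixes
`β` (as a tuple) if and only if the extended walk `(v₀, …, v_r, v_{r+1})` has exactly one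
`G`-successor. -/
theorem stmt_12 {V G : Type*} [Group G] [MulAction G V] (Γ : SimpleGraph V)
    (hAut : ∀ (g : G) (u v : V), Γ.Adj u v → Γ.Adj (g • u) (g • v))
    (r : ℕ) (α : Fin (r + 1) → V)
    (hwalk : ∀ i : Fin r, Γ.Adj (α i.castSucc) (α i.succ))
    (σ : G) (hσ : ∀ i : Fin r, σ • α i.castSucc = α i.succ)
    -- the extended walk γ = (v₀, …, v_r, σ • v_r)
    (γ : Fin (r + 2) → V) (hγ : ∀ i : Fin (r + 1), γ i.castSucc = α i)
    (hγlast : γ (Fin.last (r + 1)) = σ • α (Fin.last r)) :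
    (∀ h : G, (∀ i : Fin (r + 1), h • α i = α i) →
        ∀ i : Fin (r + 1), h • σ • α i = σ • α i)
      ↔ Nat.card {δ : Fin (r + 2) → V |
          ∃ τ : G, (∀ i : Fin (r + 1), τ • γ i.castSucc = γ i.succ) ∧
            δ = fun i => τ • γ i} = 1 := by
  -- σ is a shunt of γ
  have σshunt : ∀ i : Fin (r + 1), σ • γ i.castSucc = γ i.succ := by
    intro i
    induction i using Fin.lastCases with
    | last => rw [hγ, Fin.succ_last, hγlast]
    | cast j => rw [hγ, Fin.succ_castSucc, hγ]; exact hσ j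
  constructor
  · intro hL
    rw [Nat.card_eq_one_iff_exists]
    refine ⟨⟨fun i => σ • γ i, σ, σshunt, rfl⟩, ?_⟩
    rintro ⟨δ, τ, hτ, rfl⟩
    ext i
    show τ • γ i = σ • γ i
    -- τ agrees with σ on α
    have hα : ∀ i : Fin (r + 1), τ • α i = σ • α i := by
      intro i
      induction i using Fin.lastCases with
      | last =>
        have := hτ (Fin.last r)
        rwa [hγ, Fin.succ_last, hγlast] at this
      | cast j =>
        have := hτ j.castSucc
        rw [hγ, Fin.succ_castSucc, hγ] at this
        rw [this, hσ]
    have hGα : ∀ i : Fin (r + 1), (σ⁻¹ * τ) • α i = α i := by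
      intro i
      rw [mul_smul, hα, inv_smul_smul]
    have key := hL (σ⁻¹ * τ) hGα
    induction i using Fin.lastCases with
    | last =>
      have := key (Fin.last r)
      rw [mul_smul] at this
      rw [hγlast]
      calc τ • σ • α (Fin.last r) = σ • σ⁻¹ • τ • σ • α (Fin.last r) := by
            rw [smul_inv_smul]
        _ = σ • σ • α (Fin.last r) := by rw [this]
    | cast j => rw [hγ]; exact hα j
  · intro hcard h hGα i
    rw [Nat.card_eq_one_iff_exists] at hcard
    obtain ⟨x, hx⟩ := hcard
    have hτ : ∀ j : Fin (r + 1), (σ * h) • γ j.castSucc = γ j.succ := by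
      intro j
      rw [mul_smul, hγ, hGα, ← hγ, σshunt]
    have h1 := hx ⟨fun i => (σ * h) • γ i, σ * h, hτ, rfl⟩
    have h2 := hx ⟨fun i => σ • γ i, σ, σshunt, rfl⟩
    have heq : ∀ k : Fin (r + 2), h • γ k = γ k := by
      intro k
      have : (σ * h) • γ k = σ • γ k := by
        have := h1.trans h2.symm
        exact congrFun (congrArg Subtype.val this) k
      rw [mul_smul] at this
      exact smul_left_cancel σ this
    induction i using Fin.lastCases with
    | last =>
      have := heq (Fin.last (r + 1))
      rwa [hγlast] at this
    | cast j =>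
      rw [hσ j]
      have := heq j.succ.castSucc
      rwa [hγ] at this
end

section
/- Let Γ be a connected vertex-transitive finite graph with no twin vertices (no two distinct vertices with identical neighborhoods) that is not isomorphic to a circulant Cay(ℤ_n, S) with ±1 ∈ S. Then no consistent cycle of Γ contains all vertices of Γ. -/
/-- A finite connected vertex-transitive graph with no twin vertices that is not isomorphic to
a circulant `Cay(ℤ_n, S)` with `±1 ∈ S` has no consistent cycle passing through all of its
vertices. A consistent cycle of length `k` is an injective map `v : ZMod k → V` with
`v i` adjacent to `v (i+1)` for all `i`, admitting an automorphism `g` with `g (v i) = v (i+1)`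
for all `i`. -/
theorem stmt_16 {V : Type*} [Fintype V] (Γ : SimpleGraph V)
    (hconn : Γ.Connected)
    (hvt : ∀ u w : V, ∃ g : Γ ≃g Γ, g u = w)
    (htwin : ∀ u w : V, Γ.neighborSet u = Γ.neighborSet w → u = w)
    (hnotcirc : ¬ ∃ (n : ℕ) (S : Set (ZMod n)), (1 : ZMod n) ∈ S ∧ (-1 : ZMod n) ∈ S ∧
        Nonempty (Γ ≃g SimpleGraph.circulantGraph S)) :
    ¬ ∃ (k : ℕ) (_ : 2 ≤ k) (v : ZMod k → V),
        Function.Injective v ∧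
        (∀ i : ZMod k, Γ.Adj (v i) (v (i + 1))) ∧
        (∃ g : Γ ≃g Γ, ∀ i : ZMod k, g (v i) = v (i + 1)) ∧
        Function.Surjective v := by
  rintro ⟨k, hk, v, hinj, hadj, ⟨g, hg⟩, hsurj⟩
  haveI : NeZero k := ⟨by omega⟩
  apply hnotcirc
  -- one-step shift
  have step : ∀ i j : ZMod k, Γ.Adj (v i) (v j) ↔ Γ.Adj (v (i + 1)) (v (j + 1)) := by
    intro i j
    rw [← hg i, ← hg j, SimpleGraph.Iso.map_adj_iff]
  have shiftn : ∀ (n : ℕ) (i j : ZMod k),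
      Γ.Adj (v i) (v j) ↔ Γ.Adj (v (i + n)) (v (j + n)) := by
    intro n
    induction n with
    | zero => simp
    | succ m ih =>
      intro i j
      have : ((m + 1 : ℕ) : ZMod k) = (m : ZMod k) + 1 := by push_cast; ring
      rw [this, ← add_assoc, ← add_assoc, ← step, ih]
  have shift : ∀ (d i j : ZMod k), Γ.Adj (v i) (v j) ↔ Γ.Adj (v (i + d)) (v (j + d)) := by
    intro d i j
    have hd : ((d.val : ℕ) : ZMod k) = d := by simp [ZMod.natCast_val, ZMod.cast_id]
    rw [← hd]
    exact shiftn d.val i j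
  set S : Set (ZMod k) := {d | Γ.Adj (v 0) (v d)} with hS
  have key : ∀ i j : ZMod k, Γ.Adj (v i) (v j) ↔ (j - i) ∈ S := by
    intro i j
    have := shift (-i) i j
    simp only [add_neg_cancel] at this
    rw [this, hS]
    constructor
    · intro h; simpa [sub_eq_add_neg] using h
    · intro h; simpa [sub_eq_add_neg] using h
  refine ⟨k, S, ?_, ?_, ?_⟩
  · have := hadj 0; simpa [hS] using this
  · have := (hadj (-1)).symm; simpa [hS] using this
  · -- build iso from circulant to Γ, then take symm
    refine ⟨((⟨Equiv.ofBijective v ⟨hinj, hsurj⟩, ?_⟩ :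
      SimpleGraph.circulantGraph S ≃g Γ)).symm⟩
    intro i j
    show Γ.Adj (v i) (v j) ↔ _
    rw [key, SimpleGraph.circulantGraph_adj]
    constructor
    · intro h
      refine ⟨fun hij => ?_, Or.inr h⟩
      subst hij
      have : Γ.Adj (v i) (v i) := (key i i).mpr (by simpa using h)
      exact Γ.irrefl this
    · rintro ⟨hne, h | h⟩
      · have : Γ.Adj (v j) (v i) := (key j i).mpr h
        have := this.symm
        rwa [key] at this
      · exact h
end
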